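/- Let G be a connected simply connected nilpotent Lie group, Γ ⊆ G a quasi-lattice with fundamental domain Σ constructed from a strong Malcev basis passing through an ideal n of g, N = exp(n), and pr: G → N\G the quotient map. Then pr(Γ) is a quasi-lattice in N\G with fundamental domain pr(Σ). -/

import Mathlib

/-!
Work in `N\G` and induct along the chain of normal subgroups `G_m = φ(ℝ^m × 0)`, starting from
`G_{n'} = N`, whose image is trivial. Passing from `G_m` to `G_{m+1}` adjoins the one-parameter
subgroup `f = pr ∘ e_m`, which meets the normal subgroup `A = pr(G_m)` only in `1`. Writing
`a f(r) = f(fract r) · (f(fract r)⁻¹ a f(fract r)) · f(⌊r⌋)` turns a decomposition of `A` into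
one of `A f(ℝ)` with fundamental domain `f([0,1)) F` and translates `Γ f(ℤ)`. Uniqueness holds
because modulo `A` the element `f(t) σ γ f(k)` determines `t + k`, hence `t` and `k`.
-/

open Set Function Pointwise

theorem List.prod_ofFn_update_of_eq_one {M : Type*} [Monoid M] {n : ℕ} {f : Fin n → M}
    {i : Fin n} (h : ∀ j, i ≤ j → f j = 1) (a : M) :
    (List.ofFn (update f i a)).prod = (List.ofFn f).prod * a := by
  induction n with
  | zero => exact i.elim0
  | succ n ih =>
    rw [List.ofFn_succ', List.ofFn_succ', List.prod_concat, List.prod_concat]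
    induction i using Fin.lastCases with
    | last =>
      rw [update_self, h _ le_rfl, mul_one]
      congr 3
      funext j
      exact update_of_ne (Fin.castSucc_ne_last j) _ _
    | cast i =>
      have hlast := Fin.castSucc_lt_last i
      rw [update_of_ne hlast.ne', h _ hlast.le, mul_one, mul_one]
      have hcomp := update_comp_eq_of_injective f (Fin.castSucc_injective n) i a
      simp only [comp_def] at hcomp
      rw [hcomp]
      exact ih fun j hj => h _ (Fin.castSucc_le_castSucc_iff.mpr hj)

theorem List.prod_reverse_ofFn_update_of_eq_one {M : Type*} [Monoid M] {n : ℕ} {f : Fin n → M}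
    {i : Fin n} (h : ∀ j, i ≤ j → f j = 1) (a : M) :
    (List.ofFn (update f i a)).reverse.prod = a * (List.ofFn f).reverse.prod := by
  have key := List.prod_ofFn_update_of_eq_one (f := MulOpposite.op ∘ f) (i := i)
    (fun j hj => by simp [h j hj]) (MulOpposite.op a)
  rw [← comp_update] at key
  simpa [← List.map_ofFn, MulOpposite.unop_list_prod, List.map_map] using
    congrArg MulOpposite.unop key

section QuasiLattice

variable {Q : Type*} [Group Q] {R : Type*} [Ring R] [LinearOrder R] [IsStrictOrderedRing R]
  [FloorRing R]

/-- For `B` the whole group this is the paper's `B = ⊔_{γ ∈ Γ} F γ` (disjoint union). -/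
def IsQuasiLattice (B Γ F : Set Q) : Prop :=
  ∀ x ∈ B, ∃! γ, γ ∈ Γ ∧ x * γ⁻¹ ∈ F

theorem isQuasiLattice_one {F : Set Q} (h : (1 : Q) ∈ F) : IsQuasiLattice {1} {1} F := by
  rintro _ rfl
  exact ⟨1, ⟨rfl, by simpa using h⟩, fun γ hγ => hγ.1⟩

theorem Int.eq_of_add_intCast_eq {t t' : R} {k k' : ℤ} (ht : t ∈ Ico 0 1) (ht' : t' ∈ Ico 0 1)
    (h : t + k = t' + k') : k = k' := by
  simpa [Int.floor_add_intCast, Int.floor_eq_zero_iff.2 ht, Int.floor_eq_zero_iff.2 ht'] using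
    congrArg Int.floor h

theorem eq_and_eq_of_mul_mul_eq_mod_normal {A : Subgroup Q} [A.Normal] {f : R → Q}
    (hf : ∀ s t, f (s + t) = f s * f t) (hfA : ∀ r, f r ∈ A → r = 0)
    {t t' : R} (ht : t ∈ Ico 0 1) (ht' : t' ∈ Ico 0 1) {k k' : ℤ} {x x' : Q} (hx : x ∈ A)
    (hx' : x' ∈ A) (h : f t * x * f k = f t' * x' * f k') : t = t' ∧ k = k' := by
  have hsub : f (t' + k' - (t + k)) = (f (t + k))⁻¹ * f (t' + k') := by
    rw [eq_inv_mul_iff_mul_eq, ← hf, add_sub_cancel]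
  have hft' : f t' = f t * x * f k * (f k')⁻¹ * x'⁻¹ := by rw [h]; group
  have hmem : f (t' + k' - (t + k)) ∈ A := by
    have : f (t' + k' - (t + k)) = ((f k)⁻¹ * x * f k) * ((f k')⁻¹ * x' * f k')⁻¹ := by
      rw [hsub, hf, hf, hft']; group
    rw [this]
    exact mul_mem (‹A.Normal›.conj_mem' x hx _) (inv_mem (‹A.Normal›.conj_mem' x' hx' _))
  have hsum : t + k = t' + k' := (sub_eq_zero.1 (hfA _ hmem)).symm
  obtain rfl := Int.eq_of_add_intCast_eq ht ht' hsum
  exact ⟨add_right_cancel hsum, rfl⟩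

theorem IsQuasiLattice.mul_range {A : Subgroup Q} [A.Normal] {Γ F : Set Q}
    (h : IsQuasiLattice A Γ F) (hΓ : Γ ⊆ A) (hF : F ⊆ A) {f : R → Q}
    (hf : ∀ s t, f (s + t) = f s * f t) (hfA : ∀ r, f r ∈ A → r = 0) :
    IsQuasiLattice ((A : Set Q) * range f) (Γ * f '' range ((↑) : ℤ → R)) (f '' Ico 0 1 * F) := by
  rintro _ ⟨a, ha, _, ⟨r, rfl⟩, rfl⟩
  refine existsUnique_of_exists_of_unique ?_ ?_
  · obtain ⟨γ, ⟨hγ, hσ⟩, -⟩ := h _ (‹A.Normal›.conj_mem' a ha (f (Int.fract r)))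
    refine ⟨γ * f ⌊r⌋, mul_mem_mul hγ ⟨_, ⟨⌊r⌋, rfl⟩, rfl⟩,
      f (Int.fract r), ⟨_, ⟨Int.fract_nonneg r, Int.fract_lt_one r⟩, rfl⟩, _, hσ, ?_⟩
    have hr : f r = f (Int.fract r) * f ⌊r⌋ := by rw [← hf, Int.fract_add_floor]
    rw [hr]
    group
  · rintro _ _ ⟨⟨γ, hγ, _, ⟨_, ⟨k, rfl⟩, rfl⟩, rfl⟩, _, ⟨t, ht, rfl⟩, σ, hσ, hb⟩
      ⟨⟨γ', hγ', _, ⟨_, ⟨k', rfl⟩, rfl⟩, rfl⟩, _, ⟨t', ht', rfl⟩, σ', hσ', hb'⟩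
    beta_reduce at hb hb'
    have hdecomp : f t * (σ * γ) * f k = f t' * (σ' * γ') * f k' := by
      rw [← mul_assoc, hb, ← mul_assoc (f t'), hb']; group
    obtain ⟨rfl, rfl⟩ := eq_and_eq_of_mul_mul_eq_mod_normal hf hfA ht ht' (mul_mem (hF hσ) (hΓ hγ))
      (mul_mem (hF hσ') (hΓ hγ')) hdecomp
    have hx : σ * γ = σ' * γ' := by simpa using hdecomp
    obtain rfl := (h _ (mul_mem (hF hσ) (hΓ hγ))).unique ⟨hγ, by simpa⟩
      ⟨hγ', by simpa [hx]⟩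
    rfl

end QuasiLattice

namespace MalcevCoordinates

variable {G : Type*} [Group G] {n : ℕ} {e : Fin n → ℝ → G}

/-- With `e i t = exp (t X_{i+1})`, this is the Malcev coordinate map `φ`. -/
def orderedProd (e : Fin n → ℝ → G) (t : Fin n → ℝ) : G :=
  (List.ofFn fun i => e i (t i)).prod

def reversedProd (e : Fin n → ℝ → G) (t : Fin n → ℝ) : G :=
  (List.ofFn fun i => e i (t i)).reverse.prod

/-- `orderedProd e '' coordBox univ m` is the subgroup `exp (span (X_1, …, X_m))`. -/
def coordBox (D : Set ℝ) (m : ℕ) : Set (Fin n → ℝ) :=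
  univ.pi fun j => if m ≤ (j : ℕ) then {0} else D

theorem orderedProd_zero (he : ∀ i, e i 0 = 1) : orderedProd e 0 = 1 :=
  List.prod_eq_one <| by simp [he]

theorem reversedProd_zero (he : ∀ i, e i 0 = 1) : reversedProd e 0 = 1 :=
  List.prod_eq_one <| by simp [he]

theorem orderedProd_update (he : ∀ i, e i 0 = 1) {u : Fin n → ℝ} {i : Fin n}
    (hu : ∀ j, i ≤ j → u j = 0) (s : ℝ) :
    orderedProd e (update u i s) = orderedProd e u * e i s := by
  simp only [orderedProd, apply_update (fun j => e j)]
  exact List.prod_ofFn_update_of_eq_one (fun j hj => by rw [hu j hj, he]) _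

theorem reversedProd_update (he : ∀ i, e i 0 = 1) {u : Fin n → ℝ} {i : Fin n}
    (hu : ∀ j, i ≤ j → u j = 0) (s : ℝ) :
    reversedProd e (update u i s) = e i s * reversedProd e u := by
  simp only [reversedProd, apply_update (fun j => e j)]
  exact List.prod_reverse_ofFn_update_of_eq_one (fun j hj => by rw [hu j hj, he]) _

theorem orderedProd_single (he : ∀ i, e i 0 = 1) (i : Fin n) (s : ℝ) :
    orderedProd e (Pi.single i s) = e i s := by
  rw [Pi.single, orderedProd_update he (u := 0) (fun _ _ => rfl), orderedProd_zero he, one_mul]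

theorem mem_coordBox {D : Set ℝ} {m : ℕ} {t : Fin n → ℝ} :
    t ∈ coordBox D m ↔ ∀ j : Fin n, (m ≤ j → t j = 0) ∧ ((j : ℕ) < m → t j ∈ D) := by
  simp only [coordBox, mem_univ_pi]
  refine forall_congr' fun j => ?_
  split_ifs with h <;> simp [h, not_le.mp]

theorem coordBox_univ (m : ℕ) :
    coordBox (n := n) univ m = {t | ∀ j : Fin n, m ≤ (j : ℕ) → t j = 0} := by
  ext t; simp [mem_coordBox]

theorem coordBox_of_le {D : Set ℝ} {m : ℕ} (h : n ≤ m) :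
    coordBox D m = univ.pi fun (_ : Fin n) => D :=
  pi_congr rfl fun j _ => if_neg (by have := j.isLt; omega)

theorem coordBox_mono {D D' : Set ℝ} (h : D ⊆ D') (m : ℕ) : coordBox (n := n) D m ⊆ coordBox D' m :=
  pi_mono fun j _ => by split_ifs <;> simp [h]

theorem coordBox_mono_right {D : Set ℝ} (hD : (0 : ℝ) ∈ D) {m m' : ℕ} (h : m ≤ m') :
    coordBox (n := n) D m ⊆ coordBox D m' := by
  intro t ht
  rw [mem_coordBox] at ht ⊢
  intro j
  refine ⟨fun hj => (ht j).1 (h.trans hj), fun hj => ?_⟩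
  by_cases hjm : (j : ℕ) < m
  · exact (ht j).2 hjm
  · rw [(ht j).1 (not_lt.mp hjm)]; exact hD

theorem zero_mem_coordBox {D : Set ℝ} (hD : (0 : ℝ) ∈ D) (m : ℕ) :
    (0 : Fin n → ℝ) ∈ coordBox D m := by
  simp [mem_coordBox, hD]

theorem coordBox_succ (D : Set ℝ) (i : Fin n) :
    coordBox D (i + 1) = image2 (fun u s => update u i s) (coordBox D i) D := by
  have hcond : ∀ j : Fin n, j ≠ i → (i + 1 ≤ (j : ℕ) ↔ i ≤ (j : ℕ)) := fun j hj => by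
    have := Fin.val_ne_of_ne hj; omega
  ext t
  simp only [coordBox, mem_univ_pi, mem_image2]
  constructor
  · intro ht
    refine ⟨update t i 0, fun j => ?_, t i, by simpa using ht i, by simp⟩
    rcases eq_or_ne j i with rfl | hj
    · simp
    · simpa [update_of_ne hj, hcond j hj] using ht j
  · rintro ⟨u, hu, s, hs, rfl⟩ j
    rcases eq_or_ne j i with rfl | hj
    · simpa using hs
    · simpa [update_of_ne hj, hcond j hj] using hu j

theorem image_orderedProd_coordBox_succ (he : ∀ i, e i 0 = 1) (D : Set ℝ) (i : Fin n) :
    orderedProd e '' coordBox D (i + 1) = orderedProd e '' coordBox D i * e i '' D := by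
  rw [coordBox_succ, image_image2, ← image2_mul, image2_image_left, image2_image_right]
  exact image2_congr fun u hu s _ =>
    orderedProd_update he (fun j hj => (mem_coordBox.1 hu j).1 hj) s

theorem image_reversedProd_coordBox_succ (he : ∀ i, e i 0 = 1) (D : Set ℝ) (i : Fin n) :
    reversedProd e '' coordBox D (i + 1) = e i '' D * reversedProd e '' coordBox D i := by
  rw [coordBox_succ, image_image2, ← image2_mul, image2_image_left, image2_image_right,
    image2_swap]
  exact image2_congr fun s _ u hu =>
    reversedProd_update he (fun j hj => (mem_coordBox.1 hu j).1 hj) s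

theorem reversedProd_mem {K : Subgroup G} (he : ∀ i, e i 0 = 1) {m : ℕ}
    (hK : ∀ i : Fin n, (i : ℕ) < m → ∀ s, e i s ∈ K) {D : Set ℝ} {t : Fin n → ℝ}
    (ht : t ∈ coordBox D m) : reversedProd e t ∈ K := by
  refine K.list_prod_mem fun x hx => ?_
  obtain ⟨j, rfl⟩ := List.mem_ofFn.1 (List.mem_reverse.1 hx)
  by_cases hj : (j : ℕ) < m
  · exact hK j hj _
  · rw [(mem_coordBox.1 ht j).1 (not_lt.1 hj), he]
    exact K.one_mem

theorem apply_mem_image_orderedProd_coordBox (he : ∀ i, e i 0 = 1) {m : ℕ} {i : Fin n}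
    (hi : (i : ℕ) < m) (s : ℝ) : e i s ∈ orderedProd e '' coordBox univ m := by
  refine ⟨Pi.single i s, ?_, orderedProd_single he i s⟩
  rw [coordBox_univ]
  intro j hj
  exact Pi.single_eq_of_ne (fun h : j = i => by rw [h] at hj; omega) _

section Quotient

variable {N : Subgroup G} [N.Normal]

theorem image_mk'_orderedProd_coordBox_eq_one (he : ∀ i, e i 0 = 1) {n' : ℕ}
    (hN : (N : Set G) = orderedProd e '' coordBox univ n') {D : Set ℝ} (hD : (0 : ℝ) ∈ D) :
    QuotientGroup.mk' N '' (orderedProd e '' coordBox D n') = {1} := by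
  refine subset_antisymm ?_ (singleton_subset_iff.2
    ⟨1, ⟨0, zero_mem_coordBox hD n', orderedProd_zero he⟩, map_one _⟩)
  rintro _ ⟨_, ⟨t, ht, rfl⟩, rfl⟩
  refine (QuotientGroup.eq_one_iff _).2 ?_
  rw [← SetLike.mem_coe, hN]
  exact ⟨t, coordBox_mono (subset_univ D) n' ht, rfl⟩

theorem isQuasiLattice_image_coordBox_succ (hone : ∀ i s t, e i (s + t) = e i s * e i t)
    (hinj : Injective (orderedProd e)) {i : Fin n} {K : Subgroup G} [K.Normal]
    (hK : (K : Set G) = orderedProd e '' coordBox univ i) (hNK : N ≤ K)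
    (h : IsQuasiLattice (QuotientGroup.mk' N '' (orderedProd e '' coordBox univ i))
      (QuotientGroup.mk' N '' (orderedProd e '' coordBox (range ((↑) : ℤ → ℝ)) i))
      (QuotientGroup.mk' N '' (reversedProd e '' coordBox (Ico 0 1) i))) :
    IsQuasiLattice (QuotientGroup.mk' N '' (orderedProd e '' coordBox univ (i + 1)))
      (QuotientGroup.mk' N '' (orderedProd e '' coordBox (range ((↑) : ℤ → ℝ)) (i + 1)))
      (QuotientGroup.mk' N '' (reversedProd e '' coordBox (Ico 0 1) (i + 1))) := by
  set π := QuotientGroup.mk' N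
  have he : ∀ i, e i 0 = 1 := fun i => by simpa using hone i 0 0
  have hA : (K.map π : Set (G ⧸ N)) = π '' (orderedProd e '' coordBox univ i) := by
    rw [Subgroup.coe_map, hK]
  have hΓ : π '' (orderedProd e '' coordBox (range ((↑) : ℤ → ℝ)) i) ⊆ K.map π := by
    rw [hA]
    exact image_mono (image_mono (coordBox_mono (subset_univ _) i))
  have hF : π '' (reversedProd e '' coordBox (Ico 0 1) i) ⊆ K.map π := by
    rintro _ ⟨_, ⟨t, ht, rfl⟩, rfl⟩
    refine Subgroup.mem_map_of_mem π (reversedProd_mem he (fun j hj s => ?_) ht)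
    rw [← SetLike.mem_coe, hK]
    exact apply_mem_image_orderedProd_coordBox he hj s
  have hfA : ∀ r, π (e i r) ∈ K.map π → r = 0 := by
    intro r hr
    rw [← Subgroup.mem_comap, Subgroup.comap_map_eq_self (by rwa [QuotientGroup.ker_mk']),
      ← SetLike.mem_coe, hK, ← orderedProd_single he] at hr
    obtain ⟨u, hu, hu_eq⟩ := hr
    simpa [(mem_coordBox.1 hu i).1 le_rfl] using (congrFun (hinj hu_eq) i).symm
  have := (hA ▸ h).mul_range hΓ hF (f := π ∘ e i) (fun s t => by simp [hone]) hfA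
  rw [image_orderedProd_coordBox_succ he, image_orderedProd_coordBox_succ he,
    image_reversedProd_coordBox_succ he, image_mul, image_mul, image_mul, ← hA]
  simpa [image_image, range_comp] using this

theorem isQuasiLattice_image_coordBox (hone : ∀ i s t, e i (s + t) = e i s * e i t)
    (hinj : Injective (orderedProd e)) (H : ℕ → Subgroup G) (hHn : ∀ m, (H m).Normal)
    (hH : ∀ m, (H m : Set G) = orderedProd e '' coordBox univ m) {n' : ℕ}
    (hN : (N : Set G) = orderedProd e '' coordBox univ n') {m : ℕ} (hm : n' ≤ m) :
    IsQuasiLattice (QuotientGroup.mk' N '' (orderedProd e '' coordBox univ m))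
      (QuotientGroup.mk' N '' (orderedProd e '' coordBox (range ((↑) : ℤ → ℝ)) m))
      (QuotientGroup.mk' N '' (reversedProd e '' coordBox (Ico 0 1) m)) := by
  have he : ∀ i, e i 0 = 1 := fun i => by simpa using hone i 0 0
  induction m, hm using Nat.le_induction with
  | base =>
    rw [image_mk'_orderedProd_coordBox_eq_one he hN (mem_univ 0),
      image_mk'_orderedProd_coordBox_eq_one he hN (D := range ((↑) : ℤ → ℝ)) ⟨0, Int.cast_zero⟩]
    exact isQuasiLattice_one
      ⟨1, ⟨0, zero_mem_coordBox (left_mem_Ico.2 zero_lt_one) n', reversedProd_zero he⟩, map_one _⟩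
  | succ m hm ih =>
    rcases lt_or_ge m n with hmn | hnm
    · have := hHn m
      refine isQuasiLattice_image_coordBox_succ (i := ⟨m, hmn⟩) hone hinj (hH m) (fun g hg => ?_) ih
      rw [← SetLike.mem_coe, hH]
      exact image_mono (coordBox_mono_right (mem_univ 0) hm) (hN ▸ hg)
    · simpa only [coordBox_of_le hnm, coordBox_of_le (hnm.trans m.le_succ)] using ih

end Quotient

end MalcevCoordinates

open MalcevCoordinates

/-- Projection of a quasi-lattice to a quotient: let `G` be as in the quasi-lattice lemma,
with strong Malcev coordinate map `φ` passing through the ideal `n = span(X_1,…,X_{n'})`,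
so that `N = exp(n)` is a normal subgroup, and let `pr : G → N\G` be the quotient map.
Then `pr(Γ)` is a quasi-lattice in `N\G` with fundamental domain `pr(Σ)`:
`N\G = ⊔_{γ̄ ∈ pr(Γ)} pr(Σ)·γ̄` disjointly. -/
theorem malcev_quasi_lattice_quotient {G : Type*} [Group G] (n n' : ℕ)
    (e : Fin n → ℝ → G)
    (hone : ∀ (i : Fin n) (s t : ℝ), e i (s + t) = e i s * e i t)
    (φ : (Fin n → ℝ) → G)
    (hφ : ∀ t, φ t = (List.ofFn fun i => e i (t i)).prod)
    (hbij : Function.Bijective φ)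
    (hideal : ∀ m : ℕ, ∃ H : Subgroup G, H.Normal ∧
      (H : Set G) = φ '' {t : Fin n → ℝ | ∀ j : Fin n, m ≤ (j : ℕ) → t j = 0})
    (N : Subgroup G) [hNn : N.Normal]
    (hNcar : (N : Set G) = φ '' {t : Fin n → ℝ | ∀ j : Fin n, n' ≤ (j : ℕ) → t j = 0}) :
    ∀ x : G ⧸ N, ∃! γ : G ⧸ N,
      γ ∈ (QuotientGroup.mk : G → G ⧸ N) ''
            {g : G | ∃ k : Fin n → ℤ, g = φ fun i => (k i : ℝ)} ∧
      x * γ⁻¹ ∈ (QuotientGroup.mk : G → G ⧸ N) ''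
            {g : G | ∃ t : Fin n → ℝ, (∀ i, t i ∈ Set.Ico (0 : ℝ) 1) ∧
              g = (List.ofFn fun i => e i (t i)).reverse.prod} := by
  obtain rfl : φ = orderedProd e := funext hφ
  choose H hHn hH using hideal
  have hq := isQuasiLattice_image_coordBox (N := N) hone hbij.injective H hHn
    (fun m => by rw [hH, coordBox_univ]) (by rw [hNcar, coordBox_univ]) (le_max_right n n')
  have hΓ : orderedProd e '' coordBox (range ((↑) : ℤ → ℝ)) (max n n')
      = {g | ∃ k : Fin n → ℤ, g = orderedProd e fun i => (k i : ℝ)} := by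
    rw [coordBox_of_le (le_max_left n n'), ← range_piMap, ← range_comp]
    ext
    exact exists_congr fun _ => eq_comm
  have hF : reversedProd e '' coordBox (Ico 0 1) (max n n')
      = {g | ∃ t : Fin n → ℝ, (∀ i, t i ∈ Ico (0 : ℝ) 1) ∧
          g = (List.ofFn fun i => e i (t i)).reverse.prod} := by
    rw [coordBox_of_le (le_max_left n n')]
    ext; simp [reversedProd, eq_comm]
  rw [hΓ, hF, QuotientGroup.coe_mk'] at hq
  rintro ⟨g⟩
  obtain ⟨u, rfl⟩ := hbij.surjective g
  exact hq _ ⟨_, ⟨u, by simp [coordBox_of_le (le_max_left n n')], rfl⟩, rfl⟩
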